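/- Let λ : TG → GT be an entwining from a monad T = (T, m, e) to a comonad G = (G, δ, ε) on a category A, Ĝ the lifting of G to A_T, K' : A → (A_T)^{Ĝ} a functor with U^{Ĝ} ∘ K' = φ_T, and β_K : φ_T → Ĝφ_T the corresponding left Ĝ-comodule structure on φ_T. Suppose that (i) A admits equalisers of coreflexive pairs and both T and G have right adjoints, or (ii) A admits small colimits and both T and G preserve them. Then (φ_T, β_K) is Ĝ-Galois if and only if (T, U_T(β_K)) is G-Galois, i.e., writing β = U_T(β_K) : T → GT, the composite γ_T = Gm ∘ βT : TT → GT is an isomorphism. -/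

import Mathlib

open CategoryTheory CategoryTheory.Limits

namespace Paper


variable {A : Type*} [Category A]

/-- An entwining (mixed distributive law) `λ : TG ⟶ GT` from a monad `T` to a comonad `G`. -/
structure Entwining (T : Monad A) (G : Comonad A) where
  lam : (G : A ⥤ A) ⋙ (T : A ⥤ A) ⟶ (T : A ⥤ A) ⋙ (G : A ⥤ A)
  comp_mul : ∀ a : A, T.μ.app ((G : A ⥤ A).obj a) ≫ lam.app a =
      (T : A ⥤ A).map (lam.app a) ≫ lam.app ((T : A ⥤ A).obj a) ≫
        (G : A ⥤ A).map (T.μ.app a)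
  comp_unit : ∀ a : A, T.η.app ((G : A ⥤ A).obj a) ≫ lam.app a = (G : A ⥤ A).map (T.η.app a)
  delta_comp : ∀ a : A, lam.app a ≫ G.δ.app ((T : A ⥤ A).obj a) =
      (T : A ⥤ A).map (G.δ.app a) ≫ lam.app ((G : A ⥤ A).obj a) ≫
        (G : A ⥤ A).map (lam.app a)
  eps_comp : ∀ a : A, lam.app a ≫ G.ε.app ((T : A ⥤ A).obj a) = (T : A ⥤ A).map (G.ε.app a)

namespace Entwining

variable {T : Monad A} {G : Comonad A} (E : Entwining T G)

lemma lam_natural {a b : A} (f : a ⟶ b) :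
    (T : A ⥤ A).map ((G : A ⥤ A).map f) ≫ E.lam.app b =
      E.lam.app a ≫ (G : A ⥤ A).map ((T : A ⥤ A).map f) :=
  E.lam.naturality f

/-- The value of the lifted comonad `Ĝ` on an object of `A_T`:
`Ĝ(a, h) = (G(a), G(h) ∘ λ_a)`. -/
@[simps]
def liftAlgebra (X : T.Algebra) : T.Algebra where
  A := (G : A ⥤ A).obj X.A
  a := E.lam.app X.A ≫ (G : A ⥤ A).map X.a
  unit := by
    rw [← Category.assoc, E.comp_unit, ← Functor.map_comp, X.unit]
    simp
  assoc := by
    calc T.μ.app ((G : A ⥤ A).obj X.A) ≫ E.lam.app X.A ≫ (G : A ⥤ A).map X.a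
        = (T.μ.app ((G : A ⥤ A).obj X.A) ≫ E.lam.app X.A) ≫ (G : A ⥤ A).map X.a := by
          rw [Category.assoc]
      _ = (T : A ⥤ A).map (E.lam.app X.A) ≫ E.lam.app ((T : A ⥤ A).obj X.A) ≫
            (G : A ⥤ A).map (T.μ.app X.A) ≫ (G : A ⥤ A).map X.a := by
          rw [E.comp_mul]; simp [Category.assoc]
      _ = (T : A ⥤ A).map (E.lam.app X.A) ≫ E.lam.app ((T : A ⥤ A).obj X.A) ≫
            (G : A ⥤ A).map ((T : A ⥤ A).map X.a) ≫ (G : A ⥤ A).map X.a := by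
          rw [← Functor.map_comp, X.assoc, Functor.map_comp]
      _ = (T : A ⥤ A).map (E.lam.app X.A) ≫ (T : A ⥤ A).map ((G : A ⥤ A).map X.a) ≫
            E.lam.app X.A ≫ (G : A ⥤ A).map X.a := by
          rw [← Category.assoc (E.lam.app ((T : A ⥤ A).obj X.A)), ← E.lam_natural X.a]
          simp [Category.assoc]
      _ = (T : A ⥤ A).map (E.lam.app X.A ≫ (G : A ⥤ A).map X.a) ≫
            E.lam.app X.A ≫ (G : A ⥤ A).map X.a := by
          rw [Functor.map_comp, Category.assoc]

/-- The lifting `Ĝ` of the comonad `G` to the Eilenberg–Moore category `A_T`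
along the entwining `λ`. -/
@[simps]
def liftedComonad : Comonad (T.Algebra) where
  obj X := E.liftAlgebra X
  map {X Y} f :=
    { f := (G : A ⥤ A).map f.f
      h := by
        show (T : A ⥤ A).map ((G : A ⥤ A).map f.f) ≫ E.lam.app Y.A ≫ (G : A ⥤ A).map Y.a = (E.lam.app X.A ≫ (G : A ⥤ A).map X.a) ≫ (G : A ⥤ A).map f.f
        calc (T : A ⥤ A).map ((G : A ⥤ A).map f.f) ≫ E.lam.app Y.A ≫ (G : A ⥤ A).map Y.a
            = (E.lam.app X.A ≫ (G : A ⥤ A).map ((T : A ⥤ A).map f.f)) ≫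
                (G : A ⥤ A).map Y.a := by
              rw [← Category.assoc, E.lam_natural f.f]
          _ = E.lam.app X.A ≫ (G : A ⥤ A).map ((T : A ⥤ A).map f.f ≫ Y.a) := by
              rw [Category.assoc, ← Functor.map_comp]
          _ = E.lam.app X.A ≫ (G : A ⥤ A).map (X.a ≫ f.f) := by rw [f.h]
          _ = (E.lam.app X.A ≫ (G : A ⥤ A).map X.a) ≫ (G : A ⥤ A).map f.f := by
              rw [Functor.map_comp, Category.assoc] }
  map_id X := by ext; exact (G : A ⥤ A).map_id X.A
  map_comp f g := by ext; exact (G : A ⥤ A).map_comp f.f g.f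
  ε :=
    { app := fun X =>
        { f := G.ε.app X.A
          h := by
            show (T : A ⥤ A).map (G.ε.app X.A) ≫ X.a = (E.lam.app X.A ≫ (G : A ⥤ A).map X.a) ≫ G.ε.app X.A
            have hnat : (G : A ⥤ A).map X.a ≫ G.ε.app X.A =
                G.ε.app ((T : A ⥤ A).obj X.A) ≫ X.a := by
              simpa using (G.ε.naturality X.a).symm
            rw [Category.assoc, hnat, ← Category.assoc, E.eps_comp] }
      naturality := fun X Y f => by ext; exact G.ε.naturality f.f }
  δ :=
    { app := fun X =>
        { f := G.δ.app X.A
          h := by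
            dsimp
            calc (T : A ⥤ A).map (G.δ.app X.A) ≫ E.lam.app ((G : A ⥤ A).obj X.A) ≫
                  (G : A ⥤ A).map (E.lam.app X.A ≫ (G : A ⥤ A).map X.a)
                = (T : A ⥤ A).map (G.δ.app X.A) ≫ E.lam.app ((G : A ⥤ A).obj X.A) ≫
                    (G : A ⥤ A).map (E.lam.app X.A) ≫
                    (G : A ⥤ A).map ((G : A ⥤ A).map X.a) := by
                  rw [Functor.map_comp]
              _ = (E.lam.app X.A ≫ G.δ.app ((T : A ⥤ A).obj X.A)) ≫
                    (G : A ⥤ A).map ((G : A ⥤ A).map X.a) := by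
                  rw [E.delta_comp]; simp [Category.assoc]
              _ = E.lam.app X.A ≫ (G : A ⥤ A).map X.a ≫ G.δ.app X.A := by
                  have hnat : (G : A ⥤ A).map X.a ≫ G.δ.app X.A =
                      G.δ.app ((T : A ⥤ A).obj X.A) ≫
                        (G : A ⥤ A).map ((G : A ⥤ A).map X.a) := by
                    simpa using (G.δ.naturality X.a).symm
                  rw [hnat, Category.assoc]
              _ = (E.lam.app X.A ≫ (G : A ⥤ A).map X.a) ≫ G.δ.app X.A := by
                  rw [Category.assoc] }
      naturality := fun X Y f => by ext; exact G.δ.naturality f.f }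
  coassoc X := by ext; exact G.coassoc X.A
  left_counit X := by ext; exact G.left_counit X.A
  right_counit X := by ext; exact G.right_counit X.A


/-- The value of the lifted monad `T̂` on an object of `A^G`: `T̂(a, θ) = (T(a), λ_a ∘ T(θ))`. -/
@[simps]
def liftCoalgebra (X : G.Coalgebra) : G.Coalgebra where
  A := (T : A ⥤ A).obj X.A
  a := (T : A ⥤ A).map X.a ≫ E.lam.app X.A
  counit := by
    rw [Category.assoc, E.eps_comp, ← Functor.map_comp, X.counit]
    simp
  coassoc := by
    calc ((T : A ⥤ A).map X.a ≫ E.lam.app X.A) ≫ G.δ.app ((T : A ⥤ A).obj X.A)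
        = (T : A ⥤ A).map X.a ≫ (T : A ⥤ A).map (G.δ.app X.A) ≫
            E.lam.app ((G : A ⥤ A).obj X.A) ≫ (G : A ⥤ A).map (E.lam.app X.A) := by
          rw [Category.assoc, E.delta_comp]
      _ = (T : A ⥤ A).map (X.a ≫ G.δ.app X.A) ≫
            E.lam.app ((G : A ⥤ A).obj X.A) ≫ (G : A ⥤ A).map (E.lam.app X.A) := by
          rw [Functor.map_comp, Category.assoc]
      _ = (T : A ⥤ A).map X.a ≫ (T : A ⥤ A).map ((G : A ⥤ A).map X.a) ≫
            E.lam.app ((G : A ⥤ A).obj X.A) ≫ (G : A ⥤ A).map (E.lam.app X.A) := by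
          rw [X.coassoc, Functor.map_comp, Category.assoc]
      _ = (T : A ⥤ A).map X.a ≫ E.lam.app X.A ≫
            (G : A ⥤ A).map ((T : A ⥤ A).map X.a) ≫ (G : A ⥤ A).map (E.lam.app X.A) := by
          rw [← Category.assoc ((T : A ⥤ A).map ((G : A ⥤ A).map X.a)), E.lam_natural X.a]
          simp only [Category.assoc]
      _ = ((T : A ⥤ A).map X.a ≫ E.lam.app X.A) ≫
            (G : A ⥤ A).map ((T : A ⥤ A).map X.a ≫ E.lam.app X.A) := by
          rw [Functor.map_comp]
          simp only [Category.assoc]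


/-- The lifting of the endofunctor `T` to `A^G`. -/
@[simps]
def liftFunctorT : G.Coalgebra ⥤ G.Coalgebra where
  obj X := E.liftCoalgebra X
  map {X Y} f :=
    { f := (T : A ⥤ A).map f.f
      h := by
        show ((T : A ⥤ A).map X.a ≫ E.lam.app X.A) ≫ (G : A ⥤ A).map ((T : A ⥤ A).map f.f) = (T : A ⥤ A).map f.f ≫ (T : A ⥤ A).map Y.a ≫ E.lam.app Y.A
        calc ((T : A ⥤ A).map X.a ≫ E.lam.app X.A) ≫ (G : A ⥤ A).map ((T : A ⥤ A).map f.f)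
            = (T : A ⥤ A).map X.a ≫ E.lam.app X.A ≫
                (G : A ⥤ A).map ((T : A ⥤ A).map f.f) := by rw [Category.assoc]
          _ = (T : A ⥤ A).map X.a ≫ (T : A ⥤ A).map ((G : A ⥤ A).map f.f) ≫
                E.lam.app Y.A := by rw [← E.lam_natural f.f]
          _ = (T : A ⥤ A).map (X.a ≫ (G : A ⥤ A).map f.f) ≫ E.lam.app Y.A := by
              rw [Functor.map_comp, Category.assoc]
          _ = (T : A ⥤ A).map (f.f ≫ Y.a) ≫ E.lam.app Y.A := by rw [f.h]
          _ = (T : A ⥤ A).map f.f ≫ (T : A ⥤ A).map Y.a ≫ E.lam.app Y.A := by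
              rw [Functor.map_comp, Category.assoc] }
  map_id X := by ext; exact (T : A ⥤ A).map_id X.A
  map_comp f g := by ext; exact (T : A ⥤ A).map_comp f.f g.f

/-- The unit of the lifted monad. -/
@[simps]
def liftEta : 𝟭 (G.Coalgebra) ⟶ E.liftFunctorT where
  app X :=
    { f := T.η.app X.A
      h := by
        show X.a ≫ (G : A ⥤ A).map (T.η.app X.A) = T.η.app X.A ≫ (T : A ⥤ A).map X.a ≫ E.lam.app X.A
        have hnat : X.a ≫ T.η.app ((G : A ⥤ A).obj X.A) =
            T.η.app X.A ≫ (T : A ⥤ A).map X.a := by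
          simpa using T.η.naturality X.a
        rw [← Category.assoc, ← hnat, Category.assoc, E.comp_unit] }
  naturality X Y f := by
    ext
    show f.f ≫ T.η.app Y.A = T.η.app X.A ≫ (T : A ⥤ A).map f.f
    simpa using T.η.naturality f.f

/-- The multiplication of the lifted monad. -/
@[simps]
def liftMu : E.liftFunctorT ⋙ E.liftFunctorT ⟶ E.liftFunctorT where
  app X :=
    { f := T.μ.app X.A
      h := by
        dsimp
        have hnat : (T : A ⥤ A).map ((T : A ⥤ A).map X.a) ≫
              T.μ.app ((G : A ⥤ A).obj X.A) = T.μ.app X.A ≫ (T : A ⥤ A).map X.a := by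
          simpa using T.μ.naturality X.a
        calc ((T : A ⥤ A).map ((T : A ⥤ A).map X.a ≫ E.lam.app X.A) ≫
                E.lam.app ((T : A ⥤ A).obj X.A)) ≫ (G : A ⥤ A).map (T.μ.app X.A)
            = (T : A ⥤ A).map ((T : A ⥤ A).map X.a) ≫
                ((T : A ⥤ A).map (E.lam.app X.A) ≫ E.lam.app ((T : A ⥤ A).obj X.A) ≫
                  (G : A ⥤ A).map (T.μ.app X.A)) := by
              rw [Functor.map_comp]
              simp only [Category.assoc]
          _ = (T : A ⥤ A).map ((T : A ⥤ A).map X.a) ≫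
                T.μ.app ((G : A ⥤ A).obj X.A) ≫ E.lam.app X.A := by
              rw [← E.comp_mul]
          _ = (T.μ.app X.A ≫ (T : A ⥤ A).map X.a) ≫ E.lam.app X.A := by
              rw [← Category.assoc, hnat]
          _ = T.μ.app X.A ≫ (T : A ⥤ A).map X.a ≫ E.lam.app X.A := by
              rw [Category.assoc] }
  naturality X Y f := by
    ext
    show (T : A ⥤ A).map ((T : A ⥤ A).map f.f) ≫ T.μ.app Y.A =
      T.μ.app X.A ≫ (T : A ⥤ A).map f.f
    simpa using T.μ.naturality f.f

/-- The lifting `T̂` of the monad `T` to the Eilenberg–Moore category `A^G`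
along the entwining `λ`. -/
def liftedMonad : Monad (G.Coalgebra) where
  toFunctor := E.liftFunctorT
  η := E.liftEta
  μ := E.liftMu
  assoc X := by ext; exact T.assoc X.A
  left_unit X := by ext; exact T.left_unit X.A
  right_unit X := by ext; exact T.right_unit X.A


end Entwining


namespace Entwining

variable {A : Type*} [Category A] {F : Monad A} {G : Comonad A} (E : Entwining F G)

/-- The canonical natural transformation assembling the structure morphisms of
coalgebras over a comonad. -/
@[simps]
def coalgStructNat {C : Type*} [Category C] (H : Comonad C) :
    H.forget ⟶ H.forget ⋙ (H : C ⥤ C) where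
  app X := X.a
  naturality X Y f := by exact f.h.symm

/-- The left `Ĝ`-comodule structure `β_{K'} : φ_F ⟶ Ĝφ_F` on the free functor `φ_F`
corresponding to a functor `K' : A ⥤ (A_F)^{Ĝ}` with `U^{Ĝ} ∘ K' = φ_F`. -/
def structOfK (K' : A ⥤ E.liftedComonad.Coalgebra)
    (hK' : K' ⋙ Comonad.forget E.liftedComonad = F.free) :
    F.free ⟶ F.free ⋙ (E.liftedComonad : F.Algebra ⥤ F.Algebra) :=
  eqToHom hK'.symm ≫ Functor.whiskerLeft K' (coalgStructNat E.liftedComonad) ≫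
    Functor.whiskerRight (eqToHom hK') (E.liftedComonad : F.Algebra ⥤ F.Algebra)

/-- The underlying left `G`-comodule structure `β = U_F(β_{K'}) : F ⟶ GF` on the
functor `F` induced by a functor `K'` as above. -/
def inducedComod (K' : A ⥤ E.liftedComonad.Coalgebra)
    (hK' : K' ⋙ Comonad.forget E.liftedComonad = F.free) :
    (F : A ⥤ A) ⟶ (F : A ⥤ A) ⋙ (G : A ⥤ A) :=
  Functor.whiskerRight (E.structOfK K' hK') F.forget


end Entwining

/-!
The `Ĝ`-Galois map at a `T`-algebra `(a, h)` has underlying morphism `β_a ≫ G(h) : Ta ⟶ Ga`,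
and at the free algebra `(Ta, μ_a)` this is `γ_a`; as the forgetful functor `A_T ⥤ A` reflects
isomorphisms, one direction is immediate. Conversely, `h` is the split coequaliser of
`μ_a, T(h) : TTa ⇉ Ta`, and the naturality of `γ` together with `Tμ ≫ γ = γT ≫ Gμ` shows that
`G(η_a) ≫ γ_a⁻¹ ≫ T(h)` inverts `β_a ≫ G(h)`.
-/

section GaloisMap

variable {T : Monad A} {G : A ⥤ A} (β : (T : A ⥤ A) ⟶ (T : A ⥤ A) ⋙ G)

lemma comodule_naturality {b c : A} (f : b ⟶ c) :
    (T : A ⥤ A).map f ≫ β.app c = β.app b ≫ G.map ((T : A ⥤ A).map f) :=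
  β.naturality f

/-- The map `γ = Gμ ∘ βT : TT ⟶ GT`. -/
@[simps]
def galoisMap : (T : A ⥤ A) ⋙ (T : A ⥤ A) ⟶ (T : A ⥤ A) ⋙ G where
  app b := β.app ((T : A ⥤ A).obj b) ≫ G.map (T.μ.app b)
  naturality b c f := by
    have hμ : (T : A ⥤ A).map ((T : A ⥤ A).map f) ≫ T.μ.app c =
        T.μ.app b ≫ (T : A ⥤ A).map f := T.μ.naturality f
    simp only [Functor.comp_obj, Functor.comp_map, ← Category.assoc, comodule_naturality]
    simp only [Category.assoc, ← G.map_comp, hμ]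

/-- The underlying morphism `β_a ≫ G(h)` of the Galois map of `(φ_T, β)` at an algebra `(a, h)`. -/
def algebraGaloisMap (X : T.Algebra) : (T : A ⥤ A).obj X.A ⟶ G.obj X.A :=
  β.app X.A ≫ G.map X.a

lemma map_a_comp_algebraGaloisMap (X : T.Algebra) :
    (T : A ⥤ A).map X.a ≫ algebraGaloisMap β X = (galoisMap β).app X.A ≫ G.map X.a := by
  rw [algebraGaloisMap, ← Category.assoc, comodule_naturality, galoisMap_app, Category.assoc,
    Category.assoc, ← G.map_comp, ← G.map_comp, X.assoc]

lemma map_μ_comp_galoisMap (b : A) :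
    (T : A ⥤ A).map (T.μ.app b) ≫ (galoisMap β).app b =
      (galoisMap β).app ((T : A ⥤ A).obj b) ≫ G.map (T.μ.app b) := by
  rw [galoisMap_app, galoisMap_app, ← Category.assoc, comodule_naturality, Category.assoc,
    Category.assoc, ← G.map_comp, ← G.map_comp, T.assoc]
  rfl

lemma inv_galoisMap_app_comp_map_μ [IsIso (galoisMap β)] (b : A) :
    inv ((galoisMap β).app ((T : A ⥤ A).obj b)) ≫ (T : A ⥤ A).map (T.μ.app b) =
      G.map (T.μ.app b) ≫ inv ((galoisMap β).app b) := by
  rw [IsIso.inv_comp_eq, ← Category.assoc, ← map_μ_comp_galoisMap, Category.assoc,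
    IsIso.hom_inv_id, Category.comp_id]

lemma isIso_algebraGaloisMap [IsIso (galoisMap β)] (X : T.Algebra) :
    IsIso (algebraGaloisMap β X) := by
  have hβ := map_a_comp_algebraGaloisMap β X
  have hμ_inv := inv_galoisMap_app_comp_map_μ β X.A
  set γ := galoisMap β
  have hTη : (T : A ⥤ A).map (T.η.app X.A) ≫ (T : A ⥤ A).map X.a = 𝟙 _ := by
    rw [← Functor.map_comp, X.unit]
    exact (T : A ⥤ A).map_id X.A
  have : Epi ((T : A ⥤ A).map X.a) := SplitEpi.epi ⟨_, hTη⟩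
  have hη : G.map X.a ≫ G.map (T.η.app X.A) =
      G.map (T.η.app ((T : A ⥤ A).obj X.A)) ≫ G.map ((T : A ⥤ A).map X.a) := by
    rw [← G.map_comp, ← G.map_comp]
    exact congrArg G.map (T.η.naturality X.a)
  have hγ_inv : G.map ((T : A ⥤ A).map X.a) ≫ inv (γ.app X.A) =
      inv (γ.app ((T : A ⥤ A).obj X.A)) ≫ (T : A ⥤ A).map ((T : A ⥤ A).map X.a) := by
    simpa using (inv γ).naturality X.a
  have hTassoc : (T : A ⥤ A).map ((T : A ⥤ A).map X.a) ≫ (T : A ⥤ A).map X.a =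
      (T : A ⥤ A).map (T.μ.app X.A) ≫ (T : A ⥤ A).map X.a := by
    rw [← Functor.map_comp, ← X.assoc, Functor.map_comp]
  have hGunit : G.map (T.η.app ((T : A ⥤ A).obj X.A)) ≫ G.map (T.μ.app X.A) = 𝟙 _ := by
    rw [← G.map_comp, T.left_unit]
    exact G.map_id _
  have hGη : G.map (T.η.app X.A) ≫ G.map X.a = 𝟙 (G.obj X.A) := by
    rw [← G.map_comp, X.unit]
    exact G.map_id _
  refine ⟨G.map (T.η.app X.A) ≫ inv (γ.app X.A) ≫ (T : A ⥤ A).map X.a, ?_, ?_⟩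
  · rw [← cancel_epi ((T : A ⥤ A).map X.a), Category.comp_id, reassoc_of% hβ, reassoc_of% hη,
      reassoc_of% hγ_inv, hTassoc, reassoc_of% hμ_inv, reassoc_of% hGunit, IsIso.hom_inv_id_assoc]
  · rw [Category.assoc, Category.assoc, hβ, IsIso.inv_hom_id_assoc, hGη]

theorem isIso_galoisMap_iff :
    IsIso (galoisMap β) ↔ ∀ X : T.Algebra, IsIso (algebraGaloisMap β X) :=
  ⟨fun _ => isIso_algebraGaloisMap β, fun h =>
    (NatTrans.isIso_iff_isIso_app _).2 fun a => h (T.free.obj a)⟩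

end GaloisMap

lemma Entwining.structOfK_app_comp_map_counit_f {T : Monad A} {G : Comonad A}
    (E : Entwining T G) (K' : A ⥤ E.liftedComonad.Coalgebra)
    (hK' : K' ⋙ Comonad.forget E.liftedComonad = T.free) (X : T.Algebra) :
    ((E.structOfK K' hK').app X.A ≫ E.liftedComonad.map (T.adj.counit.app X)).f =
      algebraGaloisMap (E.inducedComod K' hK') X := by
  simp only [Monad.adj_counit, Monad.Algebra.comp_f, Entwining.liftedComonad_map_f]
  rfl

open Entwining in
theorem statement10_general {A : Type*} [Category A] (T : Monad A) (G : Comonad A)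
    (E : Entwining T G) (K' : A ⥤ E.liftedComonad.Coalgebra)
    (hK' : K' ⋙ Comonad.forget E.liftedComonad = T.free) :
    (∀ X : T.Algebra,
        IsIso ((E.structOfK K' hK').app X.A ≫ E.liftedComonad.map (T.adj.counit.app X))) ↔
      (∀ a : A,
        IsIso ((E.inducedComod K' hK').app ((T : A ⥤ A).obj a) ≫
          (G : A ⥤ A).map (T.μ.app a))) := by
  have hGalois : ∀ X : T.Algebra,
      IsIso ((E.structOfK K' hK').app X.A ≫ E.liftedComonad.map (T.adj.counit.app X)) ↔
        IsIso (algebraGaloisMap (E.inducedComod K' hK') X) := fun X => by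
    rw [← isIso_iff_of_reflects_iso _ (Monad.forget T), ← structOfK_app_comp_map_counit_f]
    rfl
  simp_rw [hGalois, ← isIso_galoisMap_iff, NatTrans.isIso_iff_isIso_app]
  rfl

open Entwining in
/-- **Proposition 2.4.**  Let `λ : TG ⟶ GT` be an entwining from a monad `T` to a
comonad `G` on `A`, `Ĝ` the lifting of `G` to `A_T`, `K' : A ⥤ (A_T)^{Ĝ}` a functor with
`U^{Ĝ} ∘ K' = φ_T` and `β_K : φ_T ⟶ Ĝφ_T` the corresponding `Ĝ`-comodule structure on
`φ_T`.  Suppose that (i) `A` admits equalisers of coreflexive pairs and both `T` and `G`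
have right adjoints, or (ii) `A` admits small colimits and both `T` and `G` preserve
them.  Then `(φ_T, β_K)` is `Ĝ`-Galois (the comonad morphism `t_K : φ_T U_T ⟶ Ĝ` is an
isomorphism) if and only if `(T, U_T(β_K))` is `G`-Galois (the composite
`γ_T = Gm ∘ βT : TT ⟶ GT` is an isomorphism). -/
theorem statement10 {A : Type*} [Category A] (T : Monad A) (G : Comonad A)
    (E : Entwining T G) (K' : A ⥤ E.liftedComonad.Coalgebra)
    (hK' : K' ⋙ Comonad.forget E.liftedComonad = T.free)
    (hyp : (HasCoreflexiveEqualizers A ∧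
        (T : A ⥤ A).IsLeftAdjoint ∧ (G : A ⥤ A).IsLeftAdjoint) ∨
      (HasColimits A ∧ Nonempty (PreservesColimits (T : A ⥤ A)) ∧
        Nonempty (PreservesColimits (G : A ⥤ A)))) :
    (∀ X : T.Algebra,
        IsIso ((E.structOfK K' hK').app X.A ≫ E.liftedComonad.map (T.adj.counit.app X))) ↔
      (∀ a : A,
        IsIso ((E.inducedComod K' hK').app ((T : A ⥤ A).obj a) ≫
          (G : A ⥤ A).map (T.μ.app a))) :=
  statement10_general T G E K' hK'

end Paper
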